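/- For any n ∈ ℕ, p ∈ (0,1] with pn ∈ ℤ, k ≥ 1, and any function z : V_k → 2^{−k}ℤ assigning a value in 2^{−k}ℤ to every shifted sorted k-tuple over [n], there exists a function f : S(n,p) → ℤ of degree ≤ k such that D_P f = z(P) · Ψ_P for every shifted sorted k-tuple P. -/

import Mathlib

open Finset
open scoped Classical

/-- A point of the slice `S(n,p)`: a Boolean vector whose number of ones equals `p * n`. -/
abbrev SlicePoint (n : ℕ) (p : ℝ) : Type :=
  {x : Fin n → Bool // ((Finset.univ.filter (fun i => x i = true)).card : ℝ) = p * n}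

variable {n : ℕ} {p : ℝ}

/-- Expectation with respect to the uniform measure on the slice. -/
noncomputable def sExp (f : SlicePoint n p → ℝ) : ℝ :=
  (∑ x : SlicePoint n p, f x) / (Fintype.card (SlicePoint n p) : ℝ)

/-- The inner product `⟨f,g⟩ = E_x [f x * g x]` on functions on the slice. -/
noncomputable def sInner (f g : SlicePoint n p → ℝ) : ℝ :=
  sExp (fun x => f x * g x)

/-- `‖f‖₂² = E_x [f x ^ 2]`. -/
noncomputable def sNormSq (f : SlicePoint n p → ℝ) : ℝ := sInner f f

/-- `‖f‖₂`. -/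
noncomputable def sNorm (f : SlicePoint n p → ℝ) : ℝ := Real.sqrt (sNormSq f)

/-- The `i`-th coordinate of a slice point, viewed as a real number in `{0,1}`. -/
def coordR (x : SlicePoint n p) (i : Fin n) : ℝ := if x.1 i then 1 else 0

/-- `AND_T (x) = ∏_{i ∈ T} x_i`. -/
def andT (T : Finset (Fin n)) : SlicePoint n p → ℝ := fun x => ∏ i ∈ T, coordR x i

/-- The space `L_k` of functions of degree at most `k` on the slice. -/
def degLE (n : ℕ) (p : ℝ) (k : ℕ) : Submodule ℝ (SlicePoint n p → ℝ) :=
  Submodule.span ℝ {g | ∃ T : Finset (Fin n), T.card ≤ k ∧ g = andT T}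

/-- The space `L_{k-1}` (i.e. spanned by `AND_T` with `|T| < k`). -/
def degLT (n : ℕ) (p : ℝ) (k : ℕ) : Submodule ℝ (SlicePoint n p → ℝ) :=
  Submodule.span ℝ {g | ∃ T : Finset (Fin n), T.card < k ∧ g = andT T}

/-- `fk` is the orthogonal projection `f^{≤ k}` of `f` onto `L_k`. -/
def IsLowProj (n : ℕ) (p : ℝ) (k : ℕ) (f fk : SlicePoint n p → ℝ) : Prop :=
  fk ∈ degLE n p k ∧ ∀ g ∈ degLE n p k, sInner (f - fk) g = 0

/-- `fk` is the orthogonal projection of `f` onto the span of `AND_T`, `|T| < k`. -/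
def IsLowProjLT (n : ℕ) (p : ℝ) (k : ℕ) (f fk : SlicePoint n p → ℝ) : Prop :=
  fk ∈ degLT n p k ∧ ∀ g ∈ degLT n p k, sInner (f - fk) g = 0

/-- `Pr_x [f x ≠ g x]` under the uniform measure on the slice. -/
noncomputable def probNe (f g : SlicePoint n p → ℝ) : ℝ :=
  sExp (fun x => if f x = g x then 0 else 1)

/-- The action of a permutation on a slice point: `(x^π)_{π i} = x_i`. -/
def permPt (π : Equiv.Perm (Fin n)) (x : SlicePoint n p) : SlicePoint n p :=
  ⟨fun i => x.1 (π.symm i), by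
    have h : (Finset.univ.filter (fun i => x.1 (π.symm i) = true)) =
        (Finset.univ.filter (fun i => x.1 i = true)).map π.toEmbedding := by
      ext i
      simp [Finset.mem_map_equiv]
    rw [h, Finset.card_map]
    exact x.2⟩

/-- The derivative operator `D_{ij} f = (f - f^{(ij)})/2`. -/
noncomputable def Dij (i j : Fin n) (f : SlicePoint n p → ℝ) : SlicePoint n p → ℝ :=
  fun x => (f x - f (permPt (Equiv.swap i j) x)) / 2

/-- The derivative operator `D_P` associated with a set `P` of pairs,
obtained by composing the `D_{ab}` for `(a,b) ∈ P` (these commute for tuples). -/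
noncomputable def DP (P : Finset (Fin n × Fin n)) (f : SlicePoint n p → ℝ) :
    SlicePoint n p → ℝ :=
  P.toList.foldr (fun q g => Dij q.1 q.2 g) f

/-- `P` is a `k`-tuple: `k` pairs `(a,b)` with `a < b`, all `2k` entries distinct. -/
def IsTuple {n : ℕ} (k : ℕ) (P : Finset (Fin n × Fin n)) : Prop :=
  P.card = k ∧ (∀ q ∈ P, q.1 < q.2) ∧
    ∀ q ∈ P, ∀ r ∈ P, q ≠ r →
      q.1 ≠ r.1 ∧ q.1 ≠ r.2 ∧ q.2 ≠ r.1 ∧ q.2 ≠ r.2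

/-- `P` is shifted: for every pair `(a,b) ∈ P`, every `a' ≤ a` occurs as an entry of `P`. -/
def IsShifted {n : ℕ} (P : Finset (Fin n × Fin n)) : Prop :=
  ∀ q ∈ P, ∀ a : Fin n, a ≤ q.1 → ∃ r ∈ P, r.1 = a ∨ r.2 = a

/-- `P` is sorted: `a_i < a_j ↔ b_i < b_j`. -/
def IsSorted {n : ℕ} (P : Finset (Fin n × Fin n)) : Prop :=
  ∀ q ∈ P, ∀ r ∈ P, (q.1 < r.1 ↔ q.2 < r.2)

/-- `Ψ_P (x) = ∏_{(a,b) ∈ P} (x_b - x_a)`. -/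
def PsiP (P : Finset (Fin n × Fin n)) : SlicePoint n p → ℝ :=
  fun x => ∏ q ∈ P, (coordR x q.2 - coordR x q.1)

/-- The slice Laplacian `L f = f - (1 / C(n,2)) ∑_{i<j} f^{(ij)}`. -/
noncomputable def sliceLap (f : SlicePoint n p → ℝ) : SlicePoint n p → ℝ :=
  fun x => f x -
    (∑ q ∈ Finset.univ.filter (fun q : Fin n × Fin n => q.1 < q.2),
      f (permPt (Equiv.swap q.1 q.2) x)) / (n.choose 2 : ℝ)

/-- The noise operator `H_t = exp (-t L) = ∑_l (-t)^l L^l / l!`. -/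
noncomputable def Ht (t : ℝ) (f : SlicePoint n p → ℝ) : SlicePoint n p → ℝ :=
  fun x => ∑' l : ℕ, ((-t) ^ l / (l.factorial : ℝ)) * (sliceLap^[l] f) x

/-- The averaging operator `E_I f (x) = E_{Q ∼ S_I} [f (x^Q)]`, averaging over a uniformly
random permutation of the coordinates in `I` (fixing the coordinates outside `I`). -/
noncomputable def avgI (I : Finset (Fin n)) (f : SlicePoint n p → ℝ) : SlicePoint n p → ℝ :=
  fun x => (∑ σ : {σ : Equiv.Perm (Fin n) // ∀ i ∉ I, σ i = i}, f (permPt σ.1 x)) /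
    (Fintype.card {σ : Equiv.Perm (Fin n) // ∀ i ∉ I, σ i = i} : ℝ)

/-- The conditional variance `V_I (f) = ‖f - E_I f‖₂²`. -/
noncomputable def condVar (I : Finset (Fin n)) (f : SlicePoint n p → ℝ) : ℝ :=
  sNormSq (f - avgI I f)

/-- Expectation with respect to the uniform measure on the discrete cube. -/
noncomputable def cExp {n : ℕ} (f : (Fin n → Bool) → ℝ) : ℝ :=
  (∑ x : Fin n → Bool, f x) / (2 ^ n : ℝ)

/-- The Fourier–Walsh coefficient `f̂ (S) = E_x [f x * χ_S x]`. -/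
noncomputable def walshCoeff {n : ℕ} (f : (Fin n → Bool) → ℝ) (S : Finset (Fin n)) : ℝ :=
  cExp (fun x => f x * ∏ i ∈ S, (if x i then (-1 : ℝ) else 1))

/-- The Fourier weight of `f` beyond degree `k`: `W^{>k} (f) = ∑_{|S| > k} f̂(S)²`. -/
noncomputable def WAbove {n : ℕ} (k : ℕ) (f : (Fin n → Bool) → ℝ) : ℝ :=
  ∑ S ∈ Finset.univ.filter (fun S : Finset (Fin n) => k < S.card), walshCoeff f S ^ 2

/-- `Pr_x [f x ≠ g x]` under the uniform measure on the cube. -/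
noncomputable def cProbNe {n : ℕ} (f g : (Fin n → Bool) → ℝ) : ℝ :=
  cExp (fun x => if f x = g x then 0 else 1)

/-- The action of a permutation on a point of the cube: `(x^π)_{π i} = x_i`. -/
def cPerm {n : ℕ} (π : Equiv.Perm (Fin n)) (x : Fin n → Bool) : Fin n → Bool :=
  fun i => x (π.symm i)

/-- The derivative operator on the cube. -/
noncomputable def cDij {n : ℕ} (i j : Fin n) (f : (Fin n → Bool) → ℝ) :
    (Fin n → Bool) → ℝ :=
  fun x => (f x - f (cPerm (Equiv.swap i j) x)) / 2


/-!
`D_{ab} AND_S` vanishes unless `S` contains exactly one of `a, b`, and then equals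
`±(x_b - x_a)/2 · AND_{S \ {a,b}}`. Hence for a `k`-tuple `P` and `|S| ≤ k`,
`D_P AND_S = ε(P, S) 2^{-k} Ψ_P` with an integer `ε(P, S) ∈ {0, ±1}`, nonzero only when `S` is a
transversal of the pairs of `P`. Look for `f = ∑_Q m_Q AND_{T_Q}` over `Q ∈ V_k`, where `T_Q` is the
set of tops of `Q`: the requirement becomes the integer system `∑_Q ε(P, T_Q) m_Q = 2^k z(P)`.
Its matrix is unitriangular for the order by the sum of the tops: `ε(P, T_P) = 1`, and a transversal
`T_Q` of `P` is obtained from `T_P` by replacing some tops by the smaller bottoms, strictly unless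
`T_Q = T_P`, which forces `Q = P` because a shifted sorted tuple is determined by its tops (its
bottoms are the `k` smallest non-tops, matched to the tops in order).
-/

def tops (P : Finset (Fin n × Fin n)) : Finset (Fin n) := P.image Prod.snd

def bottoms (P : Finset (Fin n × Fin n)) : Finset (Fin n) := P.image Prod.fst

section Tuples

variable {k : ℕ} {P Q : Finset (Fin n × Fin n)}

lemma IsTuple.injOn_fst (hP : IsTuple k P) : Set.InjOn Prod.fst (P : Set (Fin n × Fin n)) :=
  fun q hq r hr h => by
    by_contra hne
    exact (hP.2.2 q hq r hr hne).1 h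

lemma IsTuple.injOn_snd (hP : IsTuple k P) : Set.InjOn Prod.snd (P : Set (Fin n × Fin n)) :=
  fun q hq r hr h => by
    by_contra hne
    exact (hP.2.2 q hq r hr hne).2.2.2 h

lemma IsTuple.card_tops (hP : IsTuple k P) : (tops P).card = k := by
  rw [tops, card_image_of_injOn hP.injOn_snd, hP.1]

lemma IsTuple.card_bottoms (hP : IsTuple k P) : (bottoms P).card = k := by
  rw [bottoms, card_image_of_injOn hP.injOn_fst, hP.1]

lemma IsTuple.notMem_tops_of_mem_bottoms (hP : IsTuple k P) {e : Fin n}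
    (he : e ∈ bottoms P) : e ∉ tops P := by
  obtain ⟨q, hq, rfl⟩ := mem_image.mp he
  intro ht
  obtain ⟨r, hr, hrq⟩ := mem_image.mp ht
  rcases eq_or_ne q r with rfl | hne
  · exact (hP.2.1 q hq).ne hrq.symm
  · exact (hP.2.2 q hq r hr hne).2.1 hrq.symm

/-- The bottoms of a shifted tuple are the `k` smallest elements outside its tops. -/
lemma IsTuple.mem_bottoms_iff (hP : IsTuple k P) (hs : IsShifted P) (e : Fin n) :
    e ∈ bottoms P ↔
      e ∉ tops P ∧ (univ.filter fun e' => e' < e ∧ e' ∉ tops P).card < k := by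
  constructor
  · intro he
    refine ⟨hP.notMem_tops_of_mem_bottoms he, ?_⟩
    obtain ⟨q, hq, rfl⟩ := mem_image.mp he
    have hsub : (univ.filter fun e' => e' < q.1 ∧ e' ∉ tops P) ⊆ (bottoms P).erase q.1 := by
      intro e' he'
      obtain ⟨hlt, hnt⟩ := (mem_filter.mp he').2
      obtain ⟨r, hr, hr1 | hr2⟩ := hs q hq e' hlt.le
      · exact mem_erase.mpr ⟨hlt.ne, mem_image.mpr ⟨r, hr, hr1⟩⟩
      · exact absurd (mem_image.mpr ⟨r, hr, hr2⟩) hnt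
    have := card_le_card hsub
    rw [card_erase_of_mem he, hP.card_bottoms] at this
    have : 0 < k := hP.card_bottoms ▸ card_pos.mpr ⟨_, he⟩
    omega
  · rintro ⟨hnt, hcard⟩
    by_contra hnb
    have hsub : bottoms P ⊆ univ.filter fun e' => e' < e ∧ e' ∉ tops P := by
      intro a ha
      refine mem_filter.mpr ⟨mem_univ _, ?_, hP.notMem_tops_of_mem_bottoms ha⟩
      obtain ⟨q, hq, rfl⟩ := mem_image.mp ha
      by_contra! hle
      obtain ⟨r, hr, hr1 | hr2⟩ := hs q hq e hle
      · exact hnb (mem_image.mpr ⟨r, hr, hr1⟩)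
      · exact hnt (mem_image.mpr ⟨r, hr, hr2⟩)
    have := card_le_card hsub
    rw [hP.card_bottoms] at this
    omega

lemma IsSorted.card_bottoms_lt (hP : IsTuple k P) (ho : IsSorted P) {q : Fin n × Fin n}
    (hq : q ∈ P) :
    ((bottoms P).filter (· < q.1)).card = ((tops P).filter (· < q.2)).card := by
  rw [bottoms, tops, filter_image, filter_image,
    card_image_of_injOn (hP.injOn_fst.mono (coe_subset.mpr (filter_subset _ _))),
    card_image_of_injOn (hP.injOn_snd.mono (coe_subset.mpr (filter_subset _ _)))]
  exact congrArg card (filter_congr fun r hr => ho r hr q hq)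

lemma Finset.eq_of_card_filter_lt_eq {α : Type*} [LinearOrder α] {T : Finset α} {b₁ b₂ : α}
    (h₁ : b₁ ∈ T) (h₂ : b₂ ∈ T) (h : (T.filter (· < b₁)).card = (T.filter (· < b₂)).card) :
    b₁ = b₂ := by
  have key : ∀ c₁ c₂ : α, c₁ ∈ T → c₁ < c₂ →
      (T.filter (· < c₁)).card < (T.filter (· < c₂)).card := fun c₁ c₂ hc₁ hlt =>
    card_lt_card <| (ssubset_iff_of_subset fun e he => by
      simp only [mem_filter] at he ⊢
      exact ⟨he.1, he.2.trans hlt⟩).mpr ⟨c₁, by simp [hc₁, hlt]⟩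
  rcases lt_trichotomy b₁ b₂ with hlt | heq | hlt
  · exact absurd h (key b₁ b₂ h₁ hlt).ne
  · exact heq
  · exact absurd h (key b₂ b₁ h₂ hlt).ne'

lemma eq_of_tops_eq (hP : IsTuple k P) (hPs : IsShifted P) (hPo : IsSorted P)
    (hQ : IsTuple k Q) (hQs : IsShifted Q) (hQo : IsSorted Q) (h : tops P = tops Q) :
    P = Q := by
  have hb : bottoms P = bottoms Q := by
    ext e
    rw [hP.mem_bottoms_iff hPs, hQ.mem_bottoms_iff hQs, h]
  refine eq_of_subset_of_card_le (fun q hq => ?_) (by rw [hP.1, hQ.1])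
  obtain ⟨q', hq', hq'1⟩ := mem_image.mp (hb ▸ mem_image_of_mem Prod.fst hq : q.1 ∈ bottoms Q)
  have hrank := hPo.card_bottoms_lt hP hq
  rw [hb, h, ← hq'1, hQo.card_bottoms_lt hQ hq'] at hrank
  have hq2 : q.2 ∈ tops Q := h ▸ mem_image_of_mem Prod.snd hq
  have h2 : q'.2 = q.2 :=
    Finset.eq_of_card_filter_lt_eq (mem_image_of_mem Prod.snd hq') hq2 hrank
  rwa [← Prod.ext hq'1 h2]

end Tuples

section Signs

def pairSign (S : Finset (Fin n)) (q : Fin n × Fin n) : ℤ :=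
  (if q.2 ∈ S then 1 else 0) - (if q.1 ∈ S then 1 else 0)

def tupleSign (P : Finset (Fin n × Fin n)) (S : Finset (Fin n)) : ℤ :=
  ∏ q ∈ P, pairSign S q

def pick (S : Finset (Fin n)) (q : Fin n × Fin n) : Fin n :=
  if q.2 ∈ S then q.2 else q.1

variable {k : ℕ} {P Q : Finset (Fin n × Fin n)} {S : Finset (Fin n)}

lemma pick_mem_of_pairSign_ne_zero {q : Fin n × Fin n} (h : pairSign S q ≠ 0) :
    pick S q ∈ S := by
  unfold pick
  split_ifs with h2
  · exact h2
  · by_contra h1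
    simp [pairSign, h1, h2] at h

lemma IsTuple.injOn_pick (hP : IsTuple k P) : Set.InjOn (pick S) (P : Set (Fin n × Fin n)) := by
  intro q hq r hr h
  by_contra hne
  have hd := hP.2.2 q hq r hr hne
  unfold pick at h
  split_ifs at h
  exacts [hd.2.2.2 h, hd.2.2.1 h, hd.2.1 h, hd.1 h]

lemma IsTuple.image_pick (hP : IsTuple k P) (hS : tupleSign P S ≠ 0) (hcard : S.card ≤ k) :
    P.image (pick S) = S := by
  refine eq_of_subset_of_card_le (fun i hi => ?_) ?_
  · obtain ⟨q, hq, rfl⟩ := mem_image.mp hi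
    exact pick_mem_of_pairSign_ne_zero (prod_ne_zero_iff.mp hS q hq)
  · rw [card_image_of_injOn hP.injOn_pick, hP.1]
    exact hcard

lemma IsTuple.tupleSign_tops (hP : IsTuple k P) : tupleSign P (tops P) = 1 :=
  prod_eq_one fun q hq => by
    have h1 : q.1 ∉ tops P := hP.notMem_tops_of_mem_bottoms (mem_image_of_mem Prod.fst hq)
    have h2 : q.2 ∈ tops P := mem_image_of_mem Prod.snd hq
    simp [pairSign, h1, h2]

lemma sum_tops_lt (hP : IsTuple k P) (hPs : IsShifted P) (hPo : IsSorted P)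
    (hQ : IsTuple k Q) (hQs : IsShifted Q) (hQo : IsSorted Q) (hne : P ≠ Q)
    (hS : tupleSign P (tops Q) ≠ 0) :
    ∑ t ∈ tops Q, (t : ℕ) < ∑ t ∈ tops P, (t : ℕ) := by
  rw [← hP.image_pick hS hQ.card_tops.le, sum_image hP.injOn_pick]
  change _ < ∑ t ∈ P.image Prod.snd, (t : ℕ)
  rw [sum_image hP.injOn_snd]
  have hle : ∀ q ∈ P, (pick (tops Q) q : ℕ) ≤ q.2 := fun q hq => by
    unfold pick
    split_ifs
    exacts [le_rfl, (hP.2.1 q hq).le]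
  refine sum_lt_sum hle ?_
  by_contra! hge
  have hsub : tops P ⊆ tops Q := fun t ht => by
    obtain ⟨q, hq, rfl⟩ := mem_image.mp ht
    by_contra hq2
    have := hge q hq
    simp only [pick, if_neg hq2] at this
    exact absurd (hP.2.1 q hq) (not_lt.mpr (Fin.le_def.mpr this))
  exact hne (eq_of_tops_eq hP hPs hPo hQ hQs hQo
    (eq_of_subset_of_card_le hsub (by rw [hP.card_tops, hQ.card_tops])))

end Signs

section Derivatives

variable {k : ℕ} {P : Finset (Fin n × Fin n)} {S : Finset (Fin n)}

lemma coordR_permPt_swap_of_ne (x : SlicePoint n p) {a b i : Fin n} (ha : i ≠ a) (hb : i ≠ b) :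
    coordR (permPt (Equiv.swap a b) x) i = coordR x i := by
  simp [coordR, permPt, Equiv.swap_apply_of_ne_of_ne ha hb]

lemma andT_permPt_swap_of_notMem (x : SlicePoint n p) {a b : Fin n} (ha : a ∉ S)
    (hb : b ∉ S) : andT S (permPt (Equiv.swap a b) x) = andT S x :=
  prod_congr rfl fun _ hi =>
    coordR_permPt_swap_of_ne x (ne_of_mem_of_not_mem hi ha) (ne_of_mem_of_not_mem hi hb)

lemma andT_eq_ite_mul_erase (x : SlicePoint n p) (i : Fin n) :
    andT S x = (if i ∈ S then coordR x i else 1) * andT (S.erase i) x := by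
  split_ifs with hi
  · exact (mul_prod_erase S _ hi).symm
  · rw [erase_eq_of_notMem hi, one_mul]

lemma Dij_mul_left {a b : Fin n} {g : SlicePoint n p → ℝ}
    (hg : ∀ x, g (permPt (Equiv.swap a b) x) = g x) (h : SlicePoint n p → ℝ) :
    Dij a b (fun x => g x * h x) = fun x => g x * Dij a b h x := by
  funext x
  simp only [Dij, hg]
  ring

lemma Dij_sum_smul {ι : Type*} (s : Finset ι) (c : ι → ℝ) (g : ι → SlicePoint n p → ℝ)
    (a b : Fin n) : Dij a b (∑ i ∈ s, c i • g i) = ∑ i ∈ s, c i • Dij a b (g i) := by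
  funext x
  simp only [Dij, Finset.sum_apply, Pi.smul_apply, smul_eq_mul]
  rw [← sum_sub_distrib, sum_div]
  exact sum_congr rfl fun _ _ => by ring

lemma DP_sum_smul {ι : Type*} (P : Finset (Fin n × Fin n)) (s : Finset ι) (c : ι → ℝ)
    (g : ι → SlicePoint n p → ℝ) : DP P (∑ i ∈ s, c i • g i) = ∑ i ∈ s, c i • DP P (g i) := by
  unfold DP
  induction P.toList with
  | nil => rfl
  | cons q L ih => simp only [List.foldr_cons, ih, Dij_sum_smul]

lemma Dij_andT {a b : Fin n} (hab : a ≠ b) :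
    Dij a b (andT S : SlicePoint n p → ℝ) = fun x =>
      pairSign S (a, b) * ((coordR x b - coordR x a) / 2) * andT ((S.erase a).erase b) x := by
  funext x
  have key : ∀ y : SlicePoint n p, andT S y =
      (if a ∈ S then coordR y a else 1) * ((if b ∈ S then coordR y b else 1) *
        andT ((S.erase a).erase b) y) := fun y => by
    rw [andT_eq_ite_mul_erase y a, andT_eq_ite_mul_erase (S := S.erase a) y b]
    simp [mem_erase, hab.symm]
  have hxa : coordR (permPt (Equiv.swap a b) x) a = coordR x b := by simp [coordR, permPt]
  have hxb : coordR (permPt (Equiv.swap a b) x) b = coordR x a := by simp [coordR, permPt]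
  have hR := andT_permPt_swap_of_notMem (S := (S.erase a).erase b) x (a := a) (b := b)
    (by simp [hab]) (by simp)
  change (andT S x - andT S (permPt (Equiv.swap a b) x)) / 2 = _
  rw [key x, key (permPt _ x), hR, hxa, hxb]
  by_cases ha : a ∈ S <;> by_cases hb : b ∈ S <;> simp [pairSign, ha, hb] <;> ring

-- The factors produced by the inner derivatives are fixed by the outer swaps (disjoint pairs).
lemma foldr_Dij_andT (L : List (Fin n × Fin n)) (hd : ∀ q ∈ L, q.1 ≠ q.2)
    (hpw : L.Pairwise fun q r => q.1 ≠ r.1 ∧ q.1 ≠ r.2 ∧ q.2 ≠ r.1 ∧ q.2 ≠ r.2) :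
    L.foldr (fun q g => Dij q.1 q.2 g) (andT S : SlicePoint n p → ℝ) = fun x =>
      (L.map fun q => (pairSign S q : ℝ) * ((coordR x q.2 - coordR x q.1) / 2)).prod *
        andT (S.filter fun i => ∀ q ∈ L, i ≠ q.1 ∧ i ≠ q.2) x := by
  induction L with
  | nil => funext x; simp
  | cons q L ih =>
    obtain ⟨hql, hpw⟩ := List.pairwise_cons.mp hpw
    rw [List.foldr_cons, ih (fun r hr => hd r (List.mem_cons_of_mem _ hr)) hpw,
      Dij_mul_left (fun x => ?inv), Dij_andT (hd q List.mem_cons_self)]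
    case inv =>
      refine congrArg List.prod (List.map_congr_left fun r hr => ?_)
      have h := hql r hr
      rw [coordR_permPt_swap_of_ne x h.2.1.symm h.2.2.2.symm,
        coordR_permPt_swap_of_ne x h.1.symm h.2.2.1.symm]
    have hsign : pairSign (S.filter fun i => ∀ r ∈ L, i ≠ r.1 ∧ i ≠ r.2) q = pairSign S q := by
      have h1 : ∀ r ∈ L, q.1 ≠ r.1 ∧ q.1 ≠ r.2 := fun r hr => ⟨(hql r hr).1, (hql r hr).2.1⟩
      have h2 : ∀ r ∈ L, q.2 ≠ r.1 ∧ q.2 ≠ r.2 := fun r hr => ⟨(hql r hr).2.2.1, (hql r hr).2.2.2⟩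
      simp only [pairSign, mem_filter, and_iff_left h1, and_iff_left h2]
    have hset : ((S.filter fun i => ∀ r ∈ L, i ≠ r.1 ∧ i ≠ r.2).erase q.1).erase q.2 =
        S.filter fun i => ∀ r ∈ q :: L, i ≠ r.1 ∧ i ≠ r.2 := by
      ext i
      simp only [mem_erase, mem_filter, List.forall_mem_cons]
      tauto
    funext x
    rw [hsign, hset, List.map_cons, List.prod_cons]
    ring

lemma IsTuple.DP_andT (hP : IsTuple k P) :
    DP P (andT S) = fun x : SlicePoint n p => (tupleSign P S : ℝ) / 2 ^ k * PsiP P x *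
      andT (S.filter fun i => ∀ q ∈ P, i ≠ q.1 ∧ i ≠ q.2) x := by
  have hd : ∀ q ∈ P.toList, q.1 ≠ q.2 := fun q hq => (hP.2.1 q (mem_toList.mp hq)).ne
  have hpw := (nodup_toList P).pairwise_of_forall_ne fun q hq r hr hne =>
    hP.2.2 q (mem_toList.mp hq) r (mem_toList.mp hr) hne
  unfold DP
  rw [foldr_Dij_andT _ hd hpw]
  funext x
  simp only [mem_toList, prod_map_toList, prod_mul_distrib, prod_div_distrib, prod_const, hP.1,
    tupleSign, PsiP, Int.cast_prod]
  ring

lemma IsTuple.DP_andT_of_card_le (hP : IsTuple k P) (hS : S.card ≤ k) :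
    DP P (andT S) = fun x : SlicePoint n p => (tupleSign P S : ℝ) / 2 ^ k * PsiP P x := by
  rw [hP.DP_andT]
  funext x
  by_cases h : tupleSign P S = 0
  · simp [h]
  have hempty : (S.filter fun i => ∀ q ∈ P, i ≠ q.1 ∧ i ≠ q.2) = ∅ := by
    refine filter_eq_empty_iff.mpr fun i hi hfree => ?_
    rw [← hP.image_pick h hS] at hi
    obtain ⟨q, hq, rfl⟩ := mem_image.mp hi
    have := hfree q hq
    unfold pick at this
    split_ifs at this <;> simp at this
  rw [hempty, andT, prod_empty, mul_one]

end Derivatives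

lemma exists_solution_of_triangular {α β R : Type*} [LinearOrder β] [Ring R] (V : Finset α)
    (M : α → α → R) (W : α → β) (hdiag : ∀ P ∈ V, M P P = 1)
    (htri : ∀ P ∈ V, ∀ Q ∈ V, Q ≠ P → M P Q ≠ 0 → W Q < W P) (w : α → R) :
    ∃ m : α → R, ∀ P ∈ V, ∑ Q ∈ V, M P Q * m Q = w P := by
  induction V using Finset.induction_on_max_value W with
  | empty => exact ⟨0, by simp⟩
  | insert a s ha hmax ih =>
    obtain ⟨m, hm⟩ := ih (fun P hP => hdiag P (mem_insert_of_mem hP))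
      (fun P hP Q hQ => htri P (mem_insert_of_mem hP) Q (mem_insert_of_mem hQ))
    have hcol : ∀ P ∈ s, M P a = 0 := fun P hP => by
      by_contra h
      exact (hmax P hP).not_gt (htri P (mem_insert_of_mem hP) a (mem_insert_self a s)
        (ne_of_mem_of_not_mem hP ha).symm h)
    refine ⟨Function.update m a (w a - ∑ Q ∈ s, M a Q * m Q), fun P hP => ?_⟩
    have hs : ∀ R, ∑ Q ∈ s, M R Q * Function.update m a (w a - ∑ Q ∈ s, M a Q * m Q) Q =
        ∑ Q ∈ s, M R Q * m Q := fun R =>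
      sum_congr rfl fun Q hQ => by rw [Function.update_of_ne (ne_of_mem_of_not_mem hQ ha)]
    rw [sum_insert ha, Function.update_self, hs]
    rcases mem_insert.mp hP with rfl | hP
    · rw [hdiag P (mem_insert_self _ _), one_mul, sub_add_cancel]
    · rw [hcol P hP, zero_mul, zero_add, hm P hP]

lemma andT_eq_intCast (S : Finset (Fin n)) (x : SlicePoint n p) :
    andT S x = ((∏ i ∈ S, if x.1 i then 1 else 0 : ℤ) : ℝ) := by
  push_cast [andT, coordR]
  rfl

theorem attain_derivatives_general (n : ℕ) (p : ℝ) (k : ℕ)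
    (z : Finset (Fin n × Fin n) → ℝ)
    (hz : ∀ P, IsTuple k P → IsShifted P → IsSorted P → ∃ m : ℤ, z P = (m : ℝ) / 2 ^ k) :
    ∃ f : SlicePoint n p → ℝ,
      (∀ x, ∃ m : ℤ, f x = m) ∧ f ∈ degLE n p k ∧
      ∀ P : Finset (Fin n × Fin n), IsTuple k P → IsShifted P → IsSorted P →
        DP P f = fun x => z P * PsiP P x := by
  choose! w hw using hz
  set V := univ.filter fun P : Finset (Fin n × Fin n) => IsTuple k P ∧ IsShifted P ∧ IsSorted P
  have hV : ∀ {P}, P ∈ V ↔ IsTuple k P ∧ IsShifted P ∧ IsSorted P := by simp [V]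
  obtain ⟨m, hm⟩ := exists_solution_of_triangular V (fun P Q => tupleSign P (tops Q))
    (fun Q => ∑ t ∈ tops Q, (t : ℕ)) (fun P hP => (hV.mp hP).1.tupleSign_tops)
    (fun P hP Q hQ hne => sum_tops_lt (hV.mp hP).1 (hV.mp hP).2.1 (hV.mp hP).2.2
      (hV.mp hQ).1 (hV.mp hQ).2.1 (hV.mp hQ).2.2 hne.symm) w
  refine ⟨∑ Q ∈ V, (m Q : ℝ) • andT (tops Q), fun x => ?_, ?_, fun P hP hPs hPo => ?_⟩
  · exact ⟨∑ Q ∈ V, m Q * ∏ i ∈ tops Q, if x.1 i then 1 else 0, by simp [andT_eq_intCast]⟩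
  · exact Submodule.sum_mem _ fun Q hQ => Submodule.smul_mem _ _
      (Submodule.subset_span ⟨tops Q, (hV.mp hQ).1.card_tops.le, rfl⟩)
  rw [DP_sum_smul]
  funext x
  calc (∑ Q ∈ V, (m Q : ℝ) • DP P (andT (tops Q))) x
      = ∑ Q ∈ V, (m Q : ℝ) * ((tupleSign P (tops Q) : ℝ) / 2 ^ k * PsiP P x) := by
        simp only [Finset.sum_apply, Pi.smul_apply, smul_eq_mul]
        exact sum_congr rfl fun Q hQ => by
          rw [hP.DP_andT_of_card_le (hV.mp hQ).1.card_tops.le]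
    _ = ((∑ Q ∈ V, tupleSign P (tops Q) * m Q : ℤ) : ℝ) / 2 ^ k * PsiP P x := by
        push_cast
        rw [sum_div, sum_mul]
        exact sum_congr rfl fun _ _ => by ring
    _ = z P * PsiP P x := by rw [hm P (hV.mpr ⟨hP, hPs, hPo⟩), hw P hP hPs hPo]

/-- For any assignment `z` of a value in `2^{-k} ℤ` to every shifted sorted `k`-tuple, there
is an integer-valued function `f` of degree `≤ k` on the slice with `D_P f = z(P) Ψ_P` for
every shifted sorted `k`-tuple `P`. -/
theorem attain_derivatives (n : ℕ) (p : ℝ) (hp : 0 < p) (hp1 : p ≤ 1)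
    (hpn : ∃ m : ℤ, (m : ℝ) = p * n) (k : ℕ) (hk : 1 ≤ k)
    (z : Finset (Fin n × Fin n) → ℝ)
    (hz : ∀ P, IsTuple k P → IsShifted P → IsSorted P → ∃ m : ℤ, z P = (m : ℝ) / 2 ^ k) :
    ∃ f : SlicePoint n p → ℝ,
      (∀ x, ∃ m : ℤ, f x = m) ∧ f ∈ degLE n p k ∧
      ∀ P : Finset (Fin n × Fin n), IsTuple k P → IsShifted P → IsSorted P →
        DP P f = fun x => z P * PsiP P x :=
  attain_derivatives_general n p k z hz
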